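/- arXiv:2004.11350 — 2 statements merged into one kernel-verified Lean document; each statement's English description precedes it below -/
import Mathlib

section
/- The center of the group G = {A ∈ SL(3,ℂ) : Aᴴ h A = h} is {ε·I₃ : ε ∈ ℂ, ε³ = 1}, which is isomorphic to ℤ/3ℤ. -/
open Matrix

noncomputable def hMat : Matrix (Fin 3) (Fin 3) ℂ :=
  !![0, 0, Complex.I; 0, 1, 0; -Complex.I, 0, 0]

/-- The carrier set of the group `G = {A ∈ SL(3,ℂ) : Aᴴ h A = h}`. -/
def Gset : Set (Matrix.SpecialLinearGroup (Fin 3) ℂ) :=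
  {A | (A : Matrix (Fin 3) (Fin 3) ℂ)ᴴ * hMat * (A : Matrix (Fin 3) (Fin 3) ℂ) = hMat}

/-!
A matrix commuting with `diag(2, 1, 1/2)` is diagonal, and a diagonal matrix commuting with an
upper unitriangular matrix whose superdiagonal entries are nonzero is scalar. Both matrices can be
chosen in `G`, so the centre of `G` consists of scalar matrices of `SL(3, ℂ)`, that is, of `ε • 1`
with `ε³ = 1`. Conversely such an `ε` has `|ε| = 1`, so `ε • 1 ∈ G`. Hence the centre of `G` is the
centre of `SL(3, ℂ)`, which is isomorphic to the group of cube roots of unity, cyclic of order 3.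
-/

open Subgroup

local notation "SL₃" => Matrix.SpecialLinearGroup (Fin 3) ℂ

theorem Subgroup.center_eq_subgroupOf_center {G : Type*} [Group G] {H : Subgroup G}
    (h : ∀ A : H, A ∈ center H → (A : G) ∈ center G) :
    center H = (center G).subgroupOf H := by
  ext A
  refine ⟨h A, fun hA => mem_center_iff.mpr fun B => Subtype.ext ?_⟩
  exact mem_center_iff.mp hA B

noncomputable def Subgroup.centerMulEquivOfCenterLE {G : Type*} [Group G] {H : Subgroup G}
    (h : ∀ A : H, A ∈ center H → (A : G) ∈ center G) (hle : center G ≤ H) :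
    center H ≃* center G :=
  (MulEquiv.subgroupCongr (center_eq_subgroupOf_center h)).trans (subgroupOfEquivOfLe hle)

namespace Gset

noncomputable def diag : SL₃ :=
  ⟨!![2, 0, 0; 0, 1, 0; 0, 0, 1/2], by simp [det_fin_three]⟩

noncomputable def unipotent : SL₃ :=
  ⟨!![1, 1, -Complex.I/2; 0, 1, -Complex.I; 0, 0, 1], by simp [det_fin_three]⟩

theorem diag_mem : diag ∈ Gset := by
  show (diag : Matrix (Fin 3) (Fin 3) ℂ)ᴴ * hMat * diag = hMat
  ext i j
  fin_cases i <;> fin_cases j <;>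
    simp [diag, hMat, conjTranspose_apply, mul_apply, Fin.sum_univ_three, map_ofNat] <;> grind

theorem unipotent_mem : unipotent ∈ Gset := by
  show (unipotent : Matrix (Fin 3) (Fin 3) ℂ)ᴴ * hMat * unipotent = hMat
  ext i j
  fin_cases i <;> fin_cases j <;>
    simp [unipotent, hMat, conjTranspose_apply, mul_apply, Fin.sum_univ_three, map_ofNat]
  grind [Complex.I_sq]

theorem eq_scalar_of_commute {M : Matrix (Fin 3) (Fin 3) ℂ}
    (hD : Commute (diag : Matrix (Fin 3) (Fin 3) ℂ) M)
    (hU : Commute (unipotent : Matrix (Fin 3) (Fin 3) ℂ) M) :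
    scalar (Fin 3) (M 0 0) = M := by
  have hD01 := congrFun₂ hD.eq 0 1
  have hD02 := congrFun₂ hD.eq 0 2
  have hD10 := congrFun₂ hD.eq 1 0
  have hD12 := congrFun₂ hD.eq 1 2
  have hD20 := congrFun₂ hD.eq 2 0
  have hD21 := congrFun₂ hD.eq 2 1
  have hU01 := congrFun₂ hU.eq 0 1
  have hU12 := congrFun₂ hU.eq 1 2
  simp only [diag, unipotent, one_div, mul_apply, of_apply, cons_val', cons_val_fin_one, cons_val_zero,
    cons_val_one, cons_val, Fin.sum_univ_three, zero_mul, mul_zero, add_zero, zero_add, mul_one, one_mul,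
    neg_mul, mul_neg] at hD01 hD02 hD10 hD12 hD20 hD21 hU01 hU12
  have h01 : M 0 1 = 0 := by linear_combination hD01
  have h02 : M 0 2 = 0 := by linear_combination (2/3 : ℂ) * hD02
  have h10 : M 1 0 = 0 := by linear_combination -hD10
  have h12 : M 1 2 = 0 := by linear_combination 2 * hD12
  have h20 : M 2 0 = 0 := by linear_combination (-2/3 : ℂ) * hD20
  have h21 : M 2 1 = 0 := by linear_combination -2 * hD21
  have h11 : M 1 1 = M 0 0 := by linear_combination hU01 + Complex.I / 2 * h21
  have h22 : M 2 2 = M 0 0 := by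
    linear_combination Complex.I * hU12 + h10 / 2 + h11 + (M 2 2 - M 1 1 - M 1 0 / 2) * Complex.I_sq
  ext i j
  fin_cases i <;> fin_cases j <;> simp [h01, h02, h10, h12, h20, h21, h11, h22]

theorem mem_of_mem_center {A : SL₃} (hA : A ∈ center SL₃) : A ∈ Gset := by
  obtain ⟨r, hr, hrA⟩ := Matrix.SpecialLinearGroup.mem_center_iff.mp hA
  have hnorm : ‖r‖ = 1 := Complex.norm_eq_one_of_pow_eq_one hr (by simp)
  show (A : Matrix (Fin 3) (Fin 3) ℂ)ᴴ * hMat * A = hMat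
  simp [← hrA, scalar_apply, ← smul_one_eq_diagonal, smul_smul, Complex.mul_conj', hnorm]

theorem coe_mem_center_of_mem_center {H : Subgroup SL₃} (hH : Gset ⊆ H) {A : H}
    (hA : A ∈ center H) : (A : SL₃) ∈ center SL₃ := by
  have hcomm : ∀ B ∈ Gset, Commute (B : Matrix (Fin 3) (Fin 3) ℂ) (A : Matrix (Fin 3) (Fin 3) ℂ) :=
    fun B hB => congrArg (fun X : H => ((X : SL₃) : Matrix (Fin 3) (Fin 3) ℂ))
      (mem_center_iff.mp hA ⟨B, hH hB⟩)
  have hscalar := eq_scalar_of_commute (hcomm _ diag_mem) (hcomm _ unipotent_mem)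
  refine mem_center_iff.mpr fun B => Subtype.ext ?_
  rw [Matrix.SpecialLinearGroup.coe_mul, Matrix.SpecialLinearGroup.coe_mul, ← hscalar]
  exact (scalar_commute _ (Commute.all _) _).symm.eq

end Gset

theorem stmt_1 (H : Subgroup (Matrix.SpecialLinearGroup (Fin 3) ℂ))
    (hH : (H : Set (Matrix.SpecialLinearGroup (Fin 3) ℂ)) = Gset) :
    ((Subgroup.center H : Subgroup H) : Set H) =
      {A : H | ∃ ε : ℂ, ε ^ 3 = 1 ∧
        ((A : Matrix.SpecialLinearGroup (Fin 3) ℂ) : Matrix (Fin 3) (Fin 3) ℂ) = ε • (1 : Matrix (Fin 3) (Fin 3) ℂ)} ∧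
    Nonempty (Subgroup.center H ≃* Multiplicative (ZMod 3)) := by
  have hcenter : ∀ A : H, A ∈ center H → (A : SL₃) ∈ center SL₃ :=
    fun _ => Gset.coe_mem_center_of_mem_center hH.ge
  have hle : center SL₃ ≤ H := fun _ hA => hH.ge (Gset.mem_of_mem_center hA)
  refine ⟨?_, ⟨mulEquivOfPrimeCardEq (p := 3) ?_ (by simp)⟩⟩
  · ext A
    rw [SetLike.mem_coe, center_eq_subgroupOf_center hcenter, mem_subgroupOf,
      Matrix.SpecialLinearGroup.mem_center_iff]
    simp [scalar_apply, smul_one_eq_diagonal, eq_comm]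
  · rw [Nat.card_congr (centerMulEquivOfCenterLE hcenter hle).toEquiv,
      Nat.card_congr (Matrix.SpecialLinearGroup.center_equiv_rootsOfUnity' 0).toEquiv,
      Fintype.card_fin, Complex.card_rootsOfUnity]
end

section
/- If λ is an eigenvalue of H = iK with K having rows (iκ, -i, τ), (0, -2iκ, 1), (1, 0, iκ), and v_λ = (λ² - κλ - 2κ², -1, i(λ - 2κ)), then ⟨v_λ, v_λ⟩ = 1 - 8κ³ + 6κλ² - 2λ³, where ⟨z,w⟩ = zᴴ h w and h has entries h₁₃ = i, h₂₂ = 1, h₃₁ = -i, zeros elsewhere. -/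
/-! For `v = (a, -1, i b)` with `a, b` real, `h` only pairs the first and third coordinates
(with weight `±i`) and the second with itself, so `⟨v, v⟩ = 1 - 2ab`. Here
`2ab = 2(λ² - κλ - 2κ²)(λ - 2κ) = 2λ³ - 6κλ² + 8κ³`. -/

open Matrix

noncomputable def hermForm (z w : Fin 3 → ℂ) : ℂ :=
  dotProduct (star z) (hMat.mulVec w)

open Complex

theorem hermForm_vec3 (x y z x' y' z' : ℂ) :
    hermForm ![x, y, z] ![x', y', z'] = I * (star x * z' - star z * x') + star y * y' := by
  simp only [hermForm, hMat, dotProduct, mulVec, Fin.sum_univ_three, Pi.star_apply,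
    cons_val_zero, cons_val_one, cons_val_two, of_apply, head_cons, tail_cons]
  ring

theorem hermForm_self_ofReal_neg_one_I_mul (a b : ℝ) :
    hermForm ![(a : ℂ), -1, I * b] ![(a : ℂ), -1, I * b] = 1 - 2 * a * b := by
  rw [hermForm_vec3]
  simp only [RCLike.star_def, map_mul, map_neg, map_one, conj_ofReal, conj_I]
  linear_combination (2 * (a : ℂ) * b) * I_sq

theorem stmt_12_general (κ lam : ℝ) :
    hermForm
        ![(lam : ℂ) ^ 2 - κ * lam - 2 * (κ : ℂ) ^ 2, -1, Complex.I * ((lam : ℂ) - 2 * κ)]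
        ![(lam : ℂ) ^ 2 - κ * lam - 2 * (κ : ℂ) ^ 2, -1, Complex.I * ((lam : ℂ) - 2 * κ)] =
      1 - 8 * (κ : ℂ) ^ 3 + 6 * κ * (lam : ℂ) ^ 2 - 2 * (lam : ℂ) ^ 3 := by
  have h := hermForm_self_ofReal_neg_one_I_mul (lam ^ 2 - κ * lam - 2 * κ ^ 2) (lam - 2 * κ)
  push_cast at h
  rw [h]
  ring

theorem stmt_12 (κ τ lam : ℝ)
    (heig : -lam ^ 3 + (3 * κ ^ 2 - τ) * lam + 2 * κ ^ 3 + 2 * κ * τ - 1 = 0) :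
    hermForm
        ![(lam : ℂ) ^ 2 - κ * lam - 2 * (κ : ℂ) ^ 2, -1, Complex.I * ((lam : ℂ) - 2 * κ)]
        ![(lam : ℂ) ^ 2 - κ * lam - 2 * (κ : ℂ) ^ 2, -1, Complex.I * ((lam : ℂ) - 2 * κ)] =
      1 - 8 * (κ : ℂ) ^ 3 + 6 * κ * (lam : ℂ) ^ 2 - 2 * (lam : ℂ) ^ 3 :=
  stmt_12_general κ lam
end
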